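/- Expand P_{a/b}(u,v,w) = Σ_{k≥0} T_k(u,v)·w^k in powers of w. For coprime integers a, b with 1 ≤ a ≤ b and a+b ≥ 5, T_2(u,v) = ((a−1)(a−2)/2)·(u+v)^{a+b−3} + a·(b−a−1)·u·(u+v)^{a+b−4} + (((b−a)^2 + 5a − 3b)/2)·u^2·(u+v)^{a+b−5} (the two halved coefficients are integers). Equivalently, for i+j = a+b−3, A_{i,j} = ((a−1)(a−2)/2)·C(a+b−3, i) + a(b−a−1)·C(a+b−4, i−1) + (((b−a)^2+5a−3b)/2)·C(a+b−5, i−2). -/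
import Mathlib


open MvPolynomial

/-- Specification of the Markov numerator polynomials `P a b` (for coprime `a ≤ b`),
defined by the base cases `P 0 1 = 1`, `P 1 1 = u + v`, `P 1 2 = (u+v)^2 + u*w`
and the Farey-parent recursion
`P (a/b) = (u+v+w) * P (p1/q1) * P (p2/q2) - u^p1 * v^q1 * w^(p1+q1) * P ((p2-p1)/(q2-q1))`,
where `p1/q1` and `p2/q2` are the Farey parents of `a/b`, ordered so that `q1 < q2`.
Here the variables are `u = X 0`, `v = X 1`, `w = X 2`. -/
structure MarkovNumerator (P : ℕ → ℕ → MvPolynomial (Fin 3) ℤ) : Prop where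
  base01 : P 0 1 = 1
  base11 : P 1 1 = X 0 + X 1
  base12 : P 1 2 = (X 0 + X 1) ^ 2 + X 0 * X 2
  farey : ∀ a b p1 q1 p2 q2 : ℕ, 1 ≤ a → a < b → 3 ≤ b → Nat.Coprime a b →
    p1 + p2 = a → q1 + q2 = b → q1 < q2 →
    ((p1 : ℤ) * q2 - (p2 : ℤ) * q1 = 1 ∨ (p2 : ℤ) * q1 - (p1 : ℤ) * q2 = 1) →
    P a b = (X 0 + X 1 + X 2) * P p1 q1 * P p2 q2
      - X 0 ^ p1 * X 1 ^ q1 * X 2 ^ (p1 + q1) * P (p2 - p1) (q2 - q1)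


/-- `markovCoeff P a b i j` is the coefficient `A_{i,j}` of the monomial
`u^i * v^j * w^(a+b-1-i-j)` in the Markov numerator `P a b`. -/
noncomputable def markovCoeff (P : ℕ → ℕ → MvPolynomial (Fin 3) ℤ) (a b i j : ℕ) : ℤ :=
  MvPolynomial.coeff
    (Finsupp.single 0 i + Finsupp.single 1 j + Finsupp.single 2 (a + b - 1 - i - j)) (P a b)

/-- `zchoose n k` is the binomial coefficient `C(n,k)` for integer arguments,
equal to `0` unless `0 ≤ k ≤ n`. -/
def zchoose (n k : ℤ) : ℤ := if 0 ≤ k ∧ k ≤ n then n.toNat.choose k.toNat else 0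


set_option maxHeartbeats 1000000

abbrev MP := MvPolynomial (Fin 3) ℤ

def mc0 (a : ℕ) : ℤ := ((a:ℤ)-1)*((a:ℤ)-2)/2
def mc1 (a b : ℕ) : ℤ := (a:ℤ)*((b:ℤ)-(a:ℤ)-1)
def mc2 (a b : ℕ) : ℤ := (((b:ℤ)-(a:ℤ))^2+5*(a:ℤ)-3*(b:ℤ))/2

lemma dvd_c0 (a : ℕ) : 2 ∣ ((a:ℤ)-1)*((a:ℤ)-2) := by
  rcases Int.even_or_odd a with h | h <;> rcases h with ⟨k, hk⟩
  · exact ⟨((a:ℤ)-1)*(k-1), by rw [hk]; ring⟩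
  · exact ⟨k*((a:ℤ)-2), by rw [hk]; ring⟩

lemma dvd_c2 (a b : ℕ) : 2 ∣ (((b:ℤ)-(a:ℤ))^2+5*(a:ℤ)-3*(b:ℤ)) := by
  have h : (((b:ℤ)-(a:ℤ))^2+5*(a:ℤ)-3*(b:ℤ)) = ((b:ℤ)-a)*(((b:ℤ)-a)+1) + 2*(3*a-2*b) := by ring
  rw [h]
  exact dvd_add (Int.even_mul_succ_self _).two_dvd ⟨_, rfl⟩

lemma two_mc0 (a : ℕ) : 2 * mc0 a = ((a:ℤ)-1)*((a:ℤ)-2) := Int.mul_ediv_cancel' (dvd_c0 a)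
lemma two_mc2 (a b : ℕ) : 2 * mc2 a b = (((b:ℤ)-(a:ℤ))^2+5*(a:ℤ)-3*(b:ℤ)) :=
  Int.mul_ediv_cancel' (dvd_c2 a b)

lemma hc0_add (p1 p2 : ℕ) :
    mc0 (p1+p2) = mc0 p1 + mc0 p2 + ((p1:ℤ)-1)*((p2:ℤ)-1) + ((p1:ℤ)-1) + ((p2:ℤ)-1) := by
  have h := two_mc0 (p1+p2); have h1 := two_mc0 p1; have h2 := two_mc0 p2
  push_cast at h
  apply mul_left_cancel₀ (by norm_num : (2:ℤ) ≠ 0)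
  linear_combination h - h1 - h2

lemma hc1_add (p1 q1 p2 q2 : ℕ) :
    mc1 (p1+p2) (q1+q2) = mc1 p1 q1 + mc1 p2 q2 + ((p1:ℤ)-1)*((q2:ℤ)-p2)
      + ((p2:ℤ)-1)*((q1:ℤ)-p1) + ((q1:ℤ)-p1) + ((q2:ℤ)-p2) := by
  unfold mc1; push_cast; ring

lemma hc2_add (p1 q1 p2 q2 : ℕ) :
    mc2 (p1+p2) (q1+q2) = mc2 p1 q1 + mc2 p2 q2 + ((q1:ℤ)-p1)*((q2:ℤ)-p2) := by
  have h := two_mc2 (p1+p2) (q1+q2); have h1 := two_mc2 p1 q1; have h2 := two_mc2 p2 q2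
  push_cast at h
  apply mul_left_cancel₀ (by norm_num : (2:ℤ) ≠ 0)
  linear_combination h - h1 - h2

/-- w-linear part of the truncation -/
noncomputable def Bp (p q : ℕ) : MP :=
  (((p:ℤ)-1 : ℤ):MP) * X 0^0 * (X 0+X 1)^(p+q-2)
    + (((q:ℤ)-(p:ℤ):ℤ):MP) * X 0^1 * (X 0+X 1)^(p+q-3)

/-- w-quadratic part of the truncation -/
noncomputable def Cp (p q : ℕ) : MP :=
  (mc0 p : MP) * X 0^0 * (X 0+X 1)^(p+q-3) + (mc1 p q : MP) * X 0^1 * (X 0+X 1)^(p+q-4)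
    + (mc2 p q : MP) * X 0^2 * (X 0+X 1)^(p+q-5)

noncomputable def Lp (p q : ℕ) : MP := (((p:ℤ)-1:ℤ):MP) * (X 0+X 1) + (((q:ℤ)-(p:ℤ):ℤ):MP) * X 0

noncomputable def Kp (p q : ℕ) : MP :=
  (mc0 p : MP) * (X 0+X 1)^2 + (mc1 p q : MP) * X 0 * (X 0+X 1) + (mc2 p q : MP) * X 0^2

/-- The truncation mod w^3 of the Markov numerator polynomial. -/
noncomputable def Ep (a b : ℕ) : MP :=
  (X 0 + X 1)^(a+b-1) + (if 3 ≤ a + b then Bp a b * X 2 + Cp a b * X 2^2 else 0)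

lemma Sne : (X 0 + X 1 : MP) ≠ 0 := by
  intro h
  have := congrArg (coeff (Finsupp.single 0 1)) h
  simp [coeff_X', Finsupp.single_eq_single_iff] at this

lemma Bnorm (p q : ℕ) (h : 3 ≤ p + q) :
    Bp p q * (X 0+X 1) = Lp p q * (X 0+X 1)^(p+q-2) := by
  unfold Bp Lp
  obtain ⟨k, hk⟩ : ∃ k, p + q = k + 3 := ⟨p+q-3, by omega⟩
  rw [hk, show k+3-2 = k+1 from by omega, show k+3-3 = k from by omega]; ring

lemma Cnorm (p q : ℕ) (hp : 1 ≤ p) (hq : 2 ≤ q) (h4 : p + q = 4 → p = 1) :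
    Cp p q * (X 0+X 1)^2 = Kp p q * (X 0+X 1)^(p+q-3) := by
  unfold Cp Kp
  rcases (by omega : p + q = 3 ∨ p + q = 4 ∨ 5 ≤ p + q) with h | h | h
  · have hp1 : p = 1 := by omega
    have hq2 : q = 2 := by omega
    subst hp1; subst hq2
    have h1 : mc1 1 2 = 0 := by norm_num [mc1]
    have h2 : mc2 1 2 = 0 := by norm_num [mc2]
    rw [h1, h2]; norm_num
  · have hp1 : p = 1 := h4 h
    have hq3 : q = 3 := by omega
    subst hp1; subst hq3
    have h2 : mc2 1 3 = 0 := by norm_num [mc2]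
    rw [h2]; norm_num; ring
  · obtain ⟨k, hk⟩ : ∃ k, p + q = k + 5 := ⟨p+q-5, by omega⟩
    rw [hk, show k+5-3 = k+2 from by omega, show k+5-4 = k+1 from by omega,
      show k+5-5 = k from by omega]; ring

lemma Ladd (p1 q1 p2 q2 : ℕ) :
    Lp (p1+p2) (q1+q2) = Lp p1 q1 + Lp p2 q2 + (X 0 + X 1) := by
  unfold Lp; push_cast; ring

lemma Kadd (p1 q1 p2 q2 : ℕ) :
    Kp (p1+p2) (q1+q2) = Kp p1 q1 + Kp p2 q2 + Lp p1 q1 * Lp p2 q2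
      + (X 0 + X 1) * (Lp p1 q1 + Lp p2 q2) := by
  unfold Kp Lp
  push_cast [hc0_add p1 p2, hc1_add p1 q1 p2 q2, hc2_add p1 q1 p2 q2]
  ring

lemma keyC (p1 q1 p2 q2 : ℕ) (hp1 : 1 ≤ p1) (hq1 : 2 ≤ q1) (hcop1 : Nat.Coprime p1 q1)
    (hp2 : 1 ≤ p2) (hq2 : 2 ≤ q2) (hcop2 : Nat.Coprime p2 q2) :
    ∃ R : MP, (X 0 + X 1 + X 2) * Ep p1 q1 * Ep p2 q2
      = Ep (p1+p2) (q1+q2) + X 2^3 * R := by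
  obtain ⟨e1, he1⟩ : ∃ e, p1+q1 = e+3 := ⟨p1+q1-3, by omega⟩
  obtain ⟨e2, he2⟩ : ∃ e, p2+q2 = e+3 := ⟨p2+q2-3, by omega⟩
  have g1 : 3 ≤ p1+q1 := by omega
  have g2 : 3 ≤ p2+q2 := by omega
  have gab : 3 ≤ (p1+p2)+(q1+q2) := by omega
  have h41 : p1 + q1 = 4 → p1 = 1 := fun h => by
    rcases (by omega : p1 = 1 ∨ (p1 = 2 ∧ q1 = 2)) with h' | ⟨ha,hb⟩
    · exact h'
    · exfalso; rw [ha, hb] at hcop1; simp [Nat.Coprime] at hcop1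
  have h42 : p2 + q2 = 4 → p2 = 1 := fun h => by
    rcases (by omega : p2 = 1 ∨ (p2 = 2 ∧ q2 = 2)) with h' | ⟨ha,hb⟩
    · exact h'
    · exfalso; rw [ha, hb] at hcop2; simp [Nat.Coprime] at hcop2
  have h4ab : (p1+p2) + (q1+q2) = 4 → p1+p2 = 1 := by omega
  have hB1 := Bnorm p1 q1 g1
  have hB2 := Bnorm p2 q2 g2
  have hBab := Bnorm (p1+p2) (q1+q2) (by omega)
  have hC1 := Cnorm p1 q1 hp1 hq1 h41
  have hC2 := Cnorm p2 q2 hp2 hq2 h42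
  have hCab := Cnorm (p1+p2) (q1+q2) (by omega) (by omega) h4ab
  rw [show p1+q1-2 = e1+1 from by omega] at hB1
  rw [show p2+q2-2 = e2+1 from by omega] at hB2
  rw [show (p1+p2)+(q1+q2)-2 = e1+e2+4 from by omega] at hBab
  rw [show p1+q1-3 = e1 from by omega] at hC1
  rw [show p2+q2-3 = e2 from by omega] at hC2
  rw [show (p1+p2)+(q1+q2)-3 = e1+e2+3 from by omega] at hCab
  have hG1 : (X 0+X 1)*((X 0+X 1)^(e1+2)*Bp p2 q2 + Bp p1 q1*(X 0+X 1)^(e2+2))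
      + (X 0+X 1)^(e1+2)*(X 0+X 1)^(e2+2) = Bp (p1+p2) (q1+q2) := by
    apply mul_right_cancel₀ Sne
    linear_combination ((X 0+X 1)*(X 0+X 1)^(e1+2)) * hB2 + ((X 0+X 1)*(X 0+X 1)^(e2+2)) * hB1
      - hBab - ((X 0+X 1)^(e1+e2+4)) * Ladd p1 q1 p2 q2
  have hG2 : (X 0+X 1)*((X 0+X 1)^(e1+2)*Cp p2 q2 + Bp p1 q1*Bp p2 q2 + Cp p1 q1*(X 0+X 1)^(e2+2))
      + ((X 0+X 1)^(e1+2)*Bp p2 q2 + Bp p1 q1*(X 0+X 1)^(e2+2)) = Cp (p1+p2) (q1+q2) := by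
    apply mul_right_cancel₀ (pow_ne_zero 4 Sne)
    linear_combination ((X 0+X 1)*(X 0+X 1)^(e1+2)*(X 0+X 1)^2) * hC2
      + ((X 0+X 1)*(X 0+X 1)^(e2+2)*(X 0+X 1)^2) * hC1
      + (Bp p2 q2*(X 0+X 1)^4 + (X 0+X 1)^(e2+2)*(X 0+X 1)^3) * hB1
      + (Lp p1 q1*(X 0+X 1)^(e1+1)*(X 0+X 1)^3 + (X 0+X 1)^(e1+2)*(X 0+X 1)^3) * hB2
      - ((X 0+X 1)^2) * hCab - ((X 0+X 1)^(e1+e2+3)*(X 0+X 1)^2) * Kadd p1 q1 p2 q2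
  rw [Ep, Ep, Ep, if_pos g1, if_pos g2, if_pos gab]
  rw [show p1+q1-1 = e1+2 from by omega, show p2+q2-1 = e2+2 from by omega,
    show (p1+p2)+(q1+q2)-1 = e1+e2+5 from by omega]
  refine ⟨(X 0+X 1)*(Bp p1 q1*Cp p2 q2 + Cp p1 q1*Bp p2 q2)
    + ((X 0+X 1)^(e1+2)*Cp p2 q2 + Bp p1 q1*Bp p2 q2 + Cp p1 q1*(X 0+X 1)^(e2+2))
    + X 2*((X 0+X 1)*(Cp p1 q1*Cp p2 q2) + Bp p1 q1*Cp p2 q2 + Cp p1 q1*Bp p2 q2)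
    + X 2^2*(Cp p1 q1*Cp p2 q2), ?_⟩
  linear_combination (X 2) * hG1 + (X 2^2) * hG2

lemma mc2A (n : ℕ) : mc2 1 (n+1) = mc2 1 n + (n:ℤ) - 2 := by
  have h1 := two_mc2 1 (n+1); have h2 := two_mc2 1 n
  push_cast at h1 h2
  apply mul_left_cancel₀ (by norm_num : (2:ℤ) ≠ 0)
  linear_combination h1 - h2

lemma mc0Succ (n : ℕ) : mc0 (n+1) = mc0 n + (n:ℤ) - 1 := by
  have h1 := two_mc0 (n+1); have h2 := two_mc0 n
  push_cast at h1 h2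
  apply mul_left_cancel₀ (by norm_num : (2:ℤ) ≠ 0)
  linear_combination h1 - h2

lemma mc2Succ (p : ℕ) : mc2 p (p+1) = (p:ℤ) - 1 := by
  have h1 := two_mc2 p (p+1)
  push_cast at h1
  apply mul_left_cancel₀ (by norm_num : (2:ℤ) ≠ 0)
  linear_combination h1

lemma hLA (m : ℕ) : Lp 1 (m+3) = Lp 1 (m+2) + X 0 := by
  unfold Lp; push_cast; ring

lemma hKA (m : ℕ) : Kp 1 (m+3) = Kp 1 (m+2) + Lp 1 (m+2)*(X 0 + X 1) - X 1 * Lp 1 (m+1) := by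
  have h := mc2A (m+2)
  norm_num at h
  unfold Kp Lp
  rw [h]
  unfold mc1; push_cast; ring

lemma keyA (m : ℕ) : ∃ R : MP, (X 0 + X 1 + X 2) * Ep 1 (m+2) - X 1 * X 2 * Ep 1 (m+1)
    = Ep 1 (m+3) + X 2^3 * R := by
  rcases m with _ | m
  · refine ⟨Cp 1 2, ?_⟩
    rw [Ep, Ep, Ep]
    norm_num [Bp, Cp, mc0, mc1, mc2]
    ring
  · -- m+1 ≥ 1, generic
    have g2 : (3:ℕ) ≤ 1+(m+1+2) := by omega
    have g3 : (3:ℕ) ≤ 1+(m+1+1) := by omega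
    have gab : (3:ℕ) ≤ 1+(m+1+3) := by omega
    have hB2 := Bnorm 1 (m+1+2) g2
    have hB3 := Bnorm 1 (m+1+1) g3
    have hBab := Bnorm 1 (m+1+3) gab
    have hC2 := Cnorm 1 (m+1+2) le_rfl (by omega) (fun _ => rfl)
    have hCab := Cnorm 1 (m+1+3) le_rfl (by omega) (fun _ => rfl)
    rw [show 1+(m+1+2)-2 = m+2 from by omega] at hB2
    rw [show 1+(m+1+1)-2 = m+1 from by omega] at hB3
    rw [show 1+(m+1+3)-2 = m+3 from by omega] at hBab
    rw [show 1+(m+1+2)-3 = m+1 from by omega] at hC2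
    rw [show 1+(m+1+3)-3 = m+2 from by omega] at hCab
    have hla := hLA (m+1)
    have hka := hKA (m+1)
    norm_num at hla hka
    have hG1 : (X 0+X 1)*Bp 1 (m+1+2) + (X 0+X 1)^(m+3) - X 1 * (X 0+X 1)^(m+2)
        = Bp 1 (m+1+3) := by
      apply mul_right_cancel₀ Sne
      linear_combination (X 0+X 1) * hB2 - hBab - ((X 0+X 1)^(m+3)) * hla
    have hG2 : (X 0+X 1)*Cp 1 (m+1+2) + Bp 1 (m+1+2) - X 1 * Bp 1 (m+1+1)
        = Cp 1 (m+1+3) := by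
      apply mul_right_cancel₀ (pow_ne_zero 4 Sne)
      linear_combination ((X 0+X 1)*(X 0+X 1)^2) * hC2 + ((X 0+X 1)^3) * hB2
        - (X 1*(X 0+X 1)^3) * hB3 - ((X 0+X 1)^2) * hCab - ((X 0+X 1)^(m+4)) * hka
    refine ⟨Cp 1 (m+1+2) - X 1 * Cp 1 (m+1+1), ?_⟩
    rw [Ep, Ep, Ep, if_pos g2, if_pos g3, if_pos gab]
    rw [show 1+(m+1+2)-1 = m+3 from by omega, show 1+(m+1+1)-1 = m+2 from by omega,
      show 1+(m+1+3)-1 = m+4 from by omega]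
    linear_combination (X 2) * hG1 + (X 2^2) * hG2 + ((X 2)*(X 0+X 1)^(m+3)) * (by ring :
      (0:MP) = 0)

lemma hLB (n : ℕ) : Lp (n+2) (n+3) = Lp (n+1) (n+2) + (X 0 + X 1) := by
  unfold Lp; push_cast; ring

lemma hKB (n : ℕ) : Kp (n+2) (n+3) = Kp (n+1) (n+2) + (X 0 + X 1)*Lp (n+1) (n+2)
    - X 0 * X 1 := by
  have h0 := mc0Succ (n+1)
  norm_num at h0
  have h2 := mc2Succ (n+2)
  have h2' := mc2Succ (n+1)
  norm_num at h2 h2'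
  unfold Kp Lp
  rw [h0, h2, h2']
  unfold mc1; push_cast; ring

lemma keyB (n : ℕ) : ∃ R : MP, (X 0 + X 1 + X 2) * (X 0 + X 1) * Ep (n+1) (n+2)
    - X 0 * X 1 * X 2^2 * Ep n (n+1) = Ep (n+2) (n+3) + X 2^3 * R := by
  rcases n with _ | n
  · refine ⟨(X 0+X 1) * Cp 1 2, ?_⟩
    rw [Ep, Ep, Ep]
    norm_num [Bp, Cp, mc0, mc1, mc2]
    ring
  · have g2 : (3:ℕ) ≤ (n+1+1)+(n+1+2) := by omega
    have g3 : (3:ℕ) ≤ (n+1)+(n+1+1) := by omega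
    have gab : (3:ℕ) ≤ (n+1+2)+(n+1+3) := by omega
    have hB2 := Bnorm (n+2) (n+3) (by omega)
    have hBab := Bnorm (n+3) (n+4) (by omega)
    have hC2 := Cnorm (n+2) (n+3) (by omega) (by omega) (fun h => by omega)
    have hCab := Cnorm (n+3) (n+4) (by omega) (by omega) (fun h => by omega)
    rw [show (n+2)+(n+3)-2 = 2*n+3 from by omega] at hB2
    rw [show (n+3)+(n+4)-2 = 2*n+5 from by omega] at hBab
    rw [show (n+2)+(n+3)-3 = 2*n+2 from by omega] at hC2
    rw [show (n+3)+(n+4)-3 = 2*n+4 from by omega] at hCab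
    have hlb := hLB (n+1)
    have hkb := hKB (n+1)
    norm_num at hlb hkb
    have hG1 : (X 0+X 1)^2*Bp (n+2) (n+3) + (X 0+X 1)^(2*n+5) = Bp (n+3) (n+4) := by
      apply mul_right_cancel₀ Sne
      linear_combination ((X 0+X 1)^2) * hB2 - hBab - ((X 0+X 1)^(2*n+5)) * hlb
    have hG2 : (X 0+X 1)^2*Cp (n+2) (n+3) + (X 0+X 1)*Bp (n+2) (n+3)
        - X 0 * X 1 * (X 0+X 1)^(2*n+2) = Cp (n+3) (n+4) := by
      apply mul_right_cancel₀ (pow_ne_zero 4 Sne)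
      linear_combination ((X 0+X 1)^2*(X 0+X 1)^2) * hC2 + ((X 0+X 1)^4) * hB2
        - ((X 0+X 1)^2) * hCab - ((X 0+X 1)^(2*n+6)) * hkb
    refine ⟨(X 0+X 1)*Cp (n+2) (n+3) - X 0*X 1*Bp (n+1) (n+2)
      - X 0*X 1*X 2*Cp (n+1) (n+2), ?_⟩
    rw [Ep, Ep, Ep, if_pos g2, if_pos g3, if_pos gab]
    rw [show (n+1+1)+(n+1+2)-1 = 2*n+4 from by omega,
      show (n+1)+(n+1+1)-1 = 2*n+2 from by omega,
      show (n+1+2)+(n+1+3)-1 = 2*n+6 from by omega]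
    norm_num
    linear_combination (X 2) * hG1 + (X 2^2) * hG2

lemma exists_PQ (a b : ℕ) (ha : 1 ≤ a) (hab : a < b) (hb : 3 ≤ b) (hcop : Nat.Coprime a b) :
    ∃ P Q : ℕ, a * Q = P * b + 1 ∧ 1 ≤ Q ∧ Q ≤ b - 1 ∧ P < a ∧ 2 * Q ≠ b := by
  have hcz : IsCoprime (a:ℤ) (b:ℤ) := Nat.isCoprime_iff_coprime.mpr hcop
  obtain ⟨x, y, hxy⟩ := hcz
  have hbz : (0:ℤ) < b := by exact_mod_cast (by omega : 0 < b)
  have haz : (1:ℤ) ≤ a := by exact_mod_cast ha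
  have habz : (a:ℤ) < b := by exact_mod_cast hab
  have hb3z : (3:ℤ) ≤ b := by exact_mod_cast hb
  set q : ℤ := x % b with hq
  have hq0 : 0 ≤ q := Int.emod_nonneg x (by omega)
  have hqb : q < b := Int.emod_lt_of_pos x hbz
  have hk : (a:ℤ)*q - 1 = b * (-y - a*(x/b)) := by
    rw [hq, Int.emod_def]; linear_combination hxy
  set k : ℤ := -y - a*(x/b) with hkd
  -- q ≥ 1
  have hq1 : 1 ≤ q := by
    rcases eq_or_lt_of_le hq0 with h | h
    · exfalso
      have h1 : (b:ℤ) * (-k) = 1 := by rw [← h] at hk; linarith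
      have h2 : (b:ℤ) ≤ 1 := Int.le_of_dvd one_pos ⟨-k, h1.symm⟩
      omega
    · omega
  -- k ≥ 0
  have hk0 : 0 ≤ k := by
    by_contra h
    push_neg at h
    have h1 : (b:ℤ)*k ≤ -b := by nlinarith
    have h2 : (1:ℤ) ≤ a*q := by nlinarith
    omega
  -- k < a
  have hka : k < a := by
    have t1 : (a:ℤ)*q ≤ a*(b-1) := by nlinarith
    have t2 : (b:ℤ)*k < b*a := by nlinarith
    exact lt_of_mul_lt_mul_left t2 (by omega)
  -- 2q ≠ b
  have h2q : 2*q ≠ b := by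
    intro h
    have h1 : q*((a:ℤ) - 2*k) = 1 := by linear_combination hk - k * h
    have h2 : q ≤ 1 := Int.le_of_dvd one_pos ⟨(a:ℤ)-2*k, h1.symm⟩
    omega
  refine ⟨k.toNat, q.toNat, ?_, by omega, by omega, by omega, by omega⟩
  have : (a:ℤ) * q.toNat = k.toNat * b + 1 := by
    rw [Int.toNat_of_nonneg hq0, Int.toNat_of_nonneg hk0]; linarith
  exact_mod_cast this

lemma mainE (Pm : ℕ → ℕ → MvPolynomial (Fin 3) ℤ) (hP : MarkovNumerator Pm) :
    ∀ b a : ℕ, a ≤ b → Nat.Coprime a b → ∃ R : MP, Pm a b = Ep a b + X 2^3 * R := by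
  intro b
  induction b using Nat.strong_induction_on with
  | _ b IH =>
  intro a hab hcop
  rcases (by omega : b = 0 ∨ b = 1 ∨ b = 2 ∨ 3 ≤ b) with rfl | rfl | rfl | hb3
  · interval_cases a
    · simp [Nat.Coprime] at hcop
  · interval_cases a
    · exact ⟨0, by rw [hP.base01, Ep]; norm_num⟩
    · exact ⟨0, by rw [hP.base11, Ep]; norm_num⟩
  · interval_cases a
    · simp [Nat.Coprime] at hcop
    · exact ⟨0, by rw [hP.base12, Ep]; norm_num [Bp, Cp, mc0, mc1, mc2]; try ring⟩
    · simp [Nat.Coprime] at hcop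
  · have ha1 : 1 ≤ a := by
      rcases Nat.eq_zero_or_pos a with rfl | h
      · exfalso; rw [Nat.coprime_zero_left] at hcop; omega
      · exact h
    have hab' : a < b := by
      rcases eq_or_lt_of_le hab with rfl | h
      · exfalso; rw [Nat.Coprime, Nat.gcd_self] at hcop; omega
      · exact h
    rcases (by omega : a = 1 ∨ b = a + 1 ∨ (2 ≤ a ∧ a + 2 ≤ b)) with rfl | hb | ⟨ha2, hba⟩
    · -- case A : a = 1
      have hrec := hP.farey 1 b 0 1 1 (b-1) le_rfl hab' hb3 hcop rfl (by omega) (by omega)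
        (Or.inr (by push_cast; ring_nf))
      obtain ⟨R2, h2⟩ := IH (b-1) (by omega) 1 (by omega) (Nat.coprime_one_left _)
      obtain ⟨R3, h3⟩ := IH (b-2) (by omega) 1 (by omega) (Nat.coprime_one_left _)
      obtain ⟨RA, hA⟩ := keyA (b-3)
      rw [show b-3+2 = b-1 from by omega, show b-3+1 = b-2 from by omega,
        show b-3+3 = b from by omega] at hA
      refine ⟨RA + (X 0+X 1+X 2)*R2 - X 1*X 2*R3, ?_⟩
      rw [hrec, hP.base01, h2, show (1:ℕ)-0 = 1 from rfl, show b-1-1 = b-2 from by omega, h3]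
      linear_combination hA
    · -- case B : b = a+1
      subst hb
      have hrec := hP.farey a (a+1) 1 1 (a-1) a ha1 (by omega) (by omega) hcop (by omega)
        (by omega) (by omega)
        (Or.inl (by rw [Nat.cast_sub ha1]; push_cast; ring))
      have hcp1 : Nat.Coprime (a-1) a := by
        have h : a - 1 + 1 = a := by omega
        rw [← h]; exact Nat.coprime_self_add_right.mpr (Nat.coprime_one_right _)
      have hcp2 : Nat.Coprime (a-2) (a-1) := by
        rcases (by omega : a = 1 ∨ 2 ≤ a) with rfl | h2
        · exact absurd hb3 (by omega)
        · have h : a - 2 + 1 = a - 1 := by omega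
          rw [← h]; exact Nat.coprime_self_add_right.mpr (Nat.coprime_one_right _)
      obtain ⟨R2, h2⟩ := IH a (by omega) (a-1) (by omega) hcp1
      obtain ⟨R3, h3⟩ := IH (a-1) (by omega) (a-2) (by omega) hcp2
      obtain ⟨RB, hB⟩ := keyB (a-2)
      rw [show a-2+1 = a-1 from by omega, show a-2+2 = a from by omega,
        show a-2+3 = a+1 from by omega] at hB
      refine ⟨RB + (X 0+X 1+X 2)*(X 0+X 1)*R2 - X 0*X 1*X 2^2*R3, ?_⟩
      rw [hrec, hP.base11, h2, show a-1-1 = a-2 from by omega, h3]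
      linear_combination hB
    · -- case C
      obtain ⟨P, Q, hPQ, hQ1, hQb, hPa, h2Q⟩ := exists_PQ a b ha1 hab' hb3 hcop
      have hZ : (a:ℤ)*Q = P*b + 1 := by exact_mod_cast hPQ
      have habz : (a:ℤ) < b := by exact_mod_cast hab'
      have hQbz : (Q:ℤ) ≤ b - 1 := by exact_mod_cast (by omega : (Q:ℤ) ≤ (b:ℤ) - 1)
      have hQ1z : (1:ℤ) ≤ Q := by exact_mod_cast hQ1
      have hPz : (0:ℤ) ≤ P := by positivity
      -- P < Q
      have f1 : P < Q := by
        have t2 : (P:ℤ)*b < Q*b := by nlinarith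
        exact_mod_cast lt_of_mul_lt_mul_right t2 (by positivity)
      -- a - P ≤ b - Q
      have f2 : a - P ≤ b - Q := by
        have t : ((a:ℤ)-P)*b ≤ ((b:ℤ)-Q)*b := by nlinarith
        have t2 : (a:ℤ)-P ≤ (b:ℤ)-Q := le_of_mul_le_mul_right t (by exact_mod_cast (by omega : 0 < b))
        omega
      -- 1 ≤ P
      have f3 : 1 ≤ P := by
        rcases Nat.eq_zero_or_pos P with rfl | h
        · exfalso; simp at hPQ; omega
        · exact h
      -- 2 ≤ Q
      have f4 : 2 ≤ Q := by
        rcases (by omega : Q = 1 ∨ 2 ≤ Q) with rfl | h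
        · exfalso
          have : b ≤ P*b := Nat.le_mul_of_pos_left b f3
          omega
        · exact h
      -- Q + 2 ≤ b
      have f5 : Q + 2 ≤ b := by
        rcases (by omega : Q = b - 1 ∨ Q + 2 ≤ b) with hq | h
        · exfalso
          have hqz : (Q:ℤ) = b - 1 := by rw [hq]; push_cast [Nat.cast_sub (by omega : 1 ≤ b)]; ring
          have e : (b:ℤ)*((a:ℤ)-P) = a+1 := by linear_combination hZ - (a:ℤ) * hqz
          have hap : (1:ℤ) ≤ (a:ℤ)-P := by
            have : (P:ℤ) < a := by exact_mod_cast hPa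
            omega
          have hbz2 : (a:ℤ) + 2 ≤ b := by exact_mod_cast hba
          nlinarith
        · exact h
      -- coprimalities
      have f6 : Nat.Coprime P Q := Nat.isCoprime_iff_coprime.mp ⟨-(b:ℤ), a, by linear_combination hZ⟩
      have f7 : Nat.Coprime (a-P) (b-Q) := Nat.isCoprime_iff_coprime.mp ⟨(Q:ℤ), -(P:ℤ), by
        rw [Nat.cast_sub hPa.le, Nat.cast_sub (by omega : Q ≤ b)]
        linear_combination hZ⟩
      rcases (by omega : 2*Q < b ∨ b < 2*Q) with hlt | hgt
      · -- parents (P,Q), (a-P, b-Q)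
        have hrec := hP.farey a b P Q (a-P) (b-Q) ha1 hab' hb3 hcop (by omega) (by omega)
          (by omega)
          (Or.inr (by rw [Nat.cast_sub hPa.le, Nat.cast_sub (by omega : Q ≤ b)]
                      linear_combination hZ))
        obtain ⟨R1, h1⟩ := IH Q (by omega) P (by omega) f6
        obtain ⟨R2, h2⟩ := IH (b-Q) (by omega) (a-P) f2 f7
        obtain ⟨RC, hC⟩ := keyC P Q (a-P) (b-Q) f3 f4 f6 (by omega) (by omega) f7
        rw [show P+(a-P) = a from by omega, show Q+(b-Q) = b from by omega] at hC
        refine ⟨RC + (X 0+X 1+X 2)*(Ep P Q*R2 + R1*Ep (a-P) (b-Q) + X 2^3*(R1*R2))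
          - X 0^P*X 1^Q*X 2^(P+Q-3)*Pm (a-P-P) (b-Q-Q), ?_⟩
        have hpow : (X 2:MP)^(P+Q) = X 2^3 * X 2^(P+Q-3) := by
          rw [← pow_add]; congr 1; omega
        rw [hrec, h1, h2, hpow]
        linear_combination hC
      · -- parents (a-P, b-Q), (P, Q)
        have hrec := hP.farey a b (a-P) (b-Q) P Q ha1 hab' hb3 hcop (by omega) (by omega)
          (by omega)
          (Or.inl (by rw [Nat.cast_sub hPa.le, Nat.cast_sub (by omega : Q ≤ b)]
                      linear_combination hZ))
        obtain ⟨R1, h1⟩ := IH (b-Q) (by omega) (a-P) f2 f7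
        obtain ⟨R2, h2⟩ := IH Q (by omega) P (by omega) f6
        obtain ⟨RC, hC⟩ := keyC (a-P) (b-Q) P Q (by omega) (by omega) f7 f3 f4 f6
        rw [show (a-P)+P = a from by omega, show (b-Q)+Q = b from by omega] at hC
        refine ⟨RC + (X 0+X 1+X 2)*(Ep (a-P) (b-Q)*R2 + R1*Ep P Q + X 2^3*(R1*R2))
          - X 0^(a-P)*X 1^(b-Q)*X 2^((a-P)+(b-Q)-3)*Pm (P-(a-P)) (Q-(b-Q)), ?_⟩
        have hpow : (X 2:MP)^((a-P)+(b-Q)) = X 2^3 * X 2^((a-P)+(b-Q)-3) := by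
          rw [← pow_add]; congr 1; omega
        rw [hrec, h1, h2, hpow]
        linear_combination hC


noncomputable def mu (i j k : ℕ) : Fin 3 →₀ ℕ :=
  Finsupp.single 0 i + Finsupp.single 1 j + Finsupp.single 2 k

lemma mu_apply0 (i j k : ℕ) : mu i j k 0 = i := by
  simp [mu, Finsupp.single_apply]

lemma mu_apply1 (i j k : ℕ) : mu i j k 1 = j := by
  simp [mu, Finsupp.single_apply]

lemma mu_apply2 (i j k : ℕ) : mu i j k 2 = k := by
  simp [mu, Finsupp.single_apply]

lemma finsupp3_eq {f g : Fin 3 →₀ ℕ} (h0 : f 0 = g 0) (h1 : f 1 = g 1) (h2 : f 2 = g 2) :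
    f = g := by
  ext x; fin_cases x <;> assumption

lemma mu_eq_iff {i j k i' j' k' : ℕ} : mu i j k = mu i' j' k' ↔ (i = i' ∧ j = j' ∧ k = k') := by
  constructor
  · intro h
    refine ⟨?_, ?_, ?_⟩
    · have := DFunLike.congr_fun h 0; rwa [mu_apply0, mu_apply0] at this
    · have := DFunLike.congr_fun h 1; rwa [mu_apply1, mu_apply1] at this
    · have := DFunLike.congr_fun h 2; rwa [mu_apply2, mu_apply2] at this
  · rintro ⟨rfl, rfl, rfl⟩; rfl

lemma coeff_S_pow (n i j k : ℕ) :
    coeff (mu i j k) ((X 0 + X 1 : MP)^n)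
      = if k = 0 ∧ i + j = n then (n.choose i : ℤ) else 0 := by
  rw [add_pow, coeff_sum]
  have hterm : ∀ t, (X 0:MP)^t * X 1^(n-t) * ((n.choose t : ℕ) : MP)
      = monomial (mu t (n-t) 0) ((n.choose t : ℤ)) := by
    intro t
    rw [show ((n.choose t : ℕ) : MP) = C ((n.choose t : ℕ) : ℤ) from
      (map_natCast (C : ℤ →+* MP) _).symm]
    rw [X_pow_eq_monomial, X_pow_eq_monomial, C_apply, monomial_mul, monomial_mul]
    congr 1 <;> simp [mu]
  by_cases hc : k = 0 ∧ i + j = n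
  · obtain ⟨rfl, hn⟩ := hc
    rw [Finset.sum_eq_single i]
    · rw [hterm, coeff_monomial, if_pos (mu_eq_iff.mpr ⟨rfl, by omega, rfl⟩), if_pos ⟨rfl, hn⟩]
    · intro t ht hne
      rw [hterm, coeff_monomial, if_neg]
      intro h
      exact hne (mu_eq_iff.mp h).1
    · intro h
      exfalso; exact h (Finset.mem_range.mpr (by omega))
  · rw [if_neg hc, Finset.sum_eq_zero]
    intro t ht
    rw [hterm, coeff_monomial, if_neg]
    intro h
    obtain ⟨rfl, h2, h3⟩ := mu_eq_iff.mp h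
    exact hc ⟨h3.symm, by rw [Finset.mem_range] at ht; omega⟩

lemma mu_sub2 (i j k t : ℕ) (h : t ≤ k) :
    mu i j k - Finsupp.single 2 t = mu i j (k-t) := by
  apply finsupp3_eq <;>
    simp [Finsupp.sub_apply, mu_apply0, mu_apply1, mu_apply2, Finsupp.single_apply]

lemma mu_sub0 (i j k t : ℕ) (h : t ≤ i) :
    mu i j k - Finsupp.single 0 t = mu (i-t) j k := by
  apply finsupp3_eq <;>
    simp [Finsupp.sub_apply, mu_apply0, mu_apply1, mu_apply2, Finsupp.single_apply]

lemma coeff_mul_X2pow (p : MP) (t i j k : ℕ) :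
    coeff (mu i j k) (p * X 2^t) = if t ≤ k then coeff (mu i j (k-t)) p else 0 := by
  rw [mul_comm, X_pow_eq_monomial, coeff_monomial_mul']
  by_cases h : t ≤ k
  · rw [if_pos (by rw [Finsupp.single_le_iff, mu_apply2]; exact h), if_pos h, one_mul,
      mu_sub2 i j k t h]
  · rw [if_neg (by rw [Finsupp.single_le_iff, mu_apply2]; exact h), if_neg h]

lemma coeff_cXS (z : ℤ) (t e i j k : ℕ) :
    coeff (mu i j k) ((z:MP) * X 0^t * (X 0+X 1)^e)
      = if k = 0 ∧ t ≤ i ∧ (i-t) + j = e then z * (e.choose (i-t) : ℤ) else 0 := by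
  rw [mul_assoc, show ((z:ℤ):MP) = C z from (eq_intCast (C : ℤ →+* MP) z).symm, coeff_C_mul]
  rw [X_pow_eq_monomial, coeff_monomial_mul']
  by_cases ht : t ≤ i
  · rw [if_pos (by rw [Finsupp.single_le_iff, mu_apply0]; exact ht), one_mul,
      mu_sub0 i j k t ht, coeff_S_pow]
    split_ifs with h1 h2 h2
    · rfl
    · exact absurd ⟨h1.1, ht, h1.2⟩ h2
    · exact absurd ⟨h2.1, h2.2.2⟩ h1
    · ring
  · rw [if_neg (by rw [Finsupp.single_le_iff, mu_apply0]; exact ht), if_neg (by tauto)]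
    ring

lemma coeff_X2cube (R : MP) (i j k : ℕ) (h : k < 3) :
    coeff (mu i j k) (X 2^3 * R) = 0 := by
  rw [X_pow_eq_monomial, coeff_monomial_mul',
    if_neg (by rw [Finsupp.single_le_iff, mu_apply2]; omega)]

lemma coeff2_Ep (a b i j : ℕ) (h5 : 5 ≤ a+b) (hij : i + j = a+b-3) :
    coeff (mu i j 2) (Ep a b)
      = mc0 a * ((a+b-3).choose i : ℤ)
        + mc1 a b * (if 1 ≤ i then ((a+b-4).choose (i-1) : ℤ) else 0)
        + mc2 a b * (if 2 ≤ i then ((a+b-5).choose (i-2) : ℤ) else 0) := by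
  rw [Ep, if_pos (by omega : 3 ≤ a+b), coeff_add, coeff_add, coeff_S_pow]
  rw [show (Bp a b * X 2) = Bp a b * X 2^1 from by rw [pow_one], coeff_mul_X2pow,
    coeff_mul_X2pow]
  rw [if_pos (by omega : 1 ≤ 2), if_pos (by omega : 2 ≤ 2)]
  rw [Bp, Cp, coeff_add, coeff_add, coeff_add, coeff_cXS, coeff_cXS, coeff_cXS, coeff_cXS,
    coeff_cXS]
  have e1 : ¬((2:ℕ) - 1 = 0 ∧ 0 ≤ i ∧ i - 0 + j = a + b - 2) := by omega
  have e2 : ¬((2:ℕ) - 1 = 0 ∧ 1 ≤ i ∧ i - 1 + j = a + b - 3) := by omega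
  rw [if_neg (by omega : ¬((2:ℕ) = 0 ∧ i + j = a+b-1)), if_neg e1, if_neg e2]
  rw [if_pos (by omega : (2:ℕ)-2 = 0 ∧ 0 ≤ i ∧ i - 0 + j = a+b-3)]
  by_cases h1 : 1 ≤ i
  · rw [if_pos (by omega : (2:ℕ)-2 = 0 ∧ 1 ≤ i ∧ i - 1 + j = a+b-4), if_pos h1]
    by_cases h2 : 2 ≤ i
    · rw [if_pos (by omega : (2:ℕ)-2 = 0 ∧ 2 ≤ i ∧ i - 2 + j = a+b-5), if_pos h2]
      simp [Nat.sub_zero]; try ring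
    · rw [if_neg (by omega : ¬((2:ℕ)-2 = 0 ∧ 2 ≤ i ∧ i - 2 + j = a+b-5)), if_neg h2]
      simp [Nat.sub_zero]; try ring
  · rw [if_neg (by omega : ¬((2:ℕ)-2 = 0 ∧ 1 ≤ i ∧ i - 1 + j = a+b-4)), if_neg h1,
      if_neg (by omega : ¬((2:ℕ)-2 = 0 ∧ 2 ≤ i ∧ i - 2 + j = a+b-5)),
      if_neg (by omega : ¬(2 ≤ i))]
    simp [Nat.sub_zero]; try ring


/-- Coefficients of `P_{a/b}` on the third diagonal `i + j = a+b-3`: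
`A_{i,j} = ((a-1)(a-2)/2)·C(a+b-3, i) + a(b-a-1)·C(a+b-4, i-1)
          + (((b-a)² + 5a - 3b)/2)·C(a+b-5, i-2)`,
the two halved coefficients being integers. -/
theorem markov_numerator_T2 (P : ℕ → ℕ → MvPolynomial (Fin 3) ℤ)
    (hP : MarkovNumerator P) (a b : ℕ) (ha : 1 ≤ a) (hab : a ≤ b) (h5 : 5 ≤ a + b)
    (hcop : Nat.Coprime a b) :
    (2 ∣ ((a : ℤ) - 1) * ((a : ℤ) - 2)) ∧
    (2 ∣ (((b : ℤ) - a) ^ 2 + 5 * a - 3 * b)) ∧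
    (∀ i j : ℕ, i + j = a + b - 3 →
      markovCoeff P a b i j =
        (((a : ℤ) - 1) * ((a : ℤ) - 2) / 2) * zchoose ((a : ℤ) + b - 3) (i : ℤ)
          + (a : ℤ) * ((b : ℤ) - a - 1) * zchoose ((a : ℤ) + b - 4) ((i : ℤ) - 1)
          + ((((b : ℤ) - a) ^ 2 + 5 * a - 3 * b) / 2) * zchoose ((a : ℤ) + b - 5) ((i : ℤ) - 2)) := by
  refine ⟨dvd_c0 a, dvd_c2 a b, ?_⟩
  intro i j hij
  obtain ⟨R, hR⟩ := mainE P hP b a hab hcop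
  have hk : a + b - 1 - i - j = 2 := by omega
  unfold markovCoeff
  rw [hk]
  change coeff (mu i j 2) (P a b) = _
  rw [hR, coeff_add, coeff_X2cube _ _ _ _ (by omega), add_zero, coeff2_Ep a b i j h5 hij]
  have hz1 : zchoose ((a:ℤ)+b-3) i = ((a+b-3).choose i : ℤ) := by
    unfold zchoose
    rw [if_pos ⟨by positivity, by omega⟩]
    have t1 : ((a:ℤ)+b-3).toNat = a+b-3 := by omega
    have t2 : ((i:ℕ):ℤ).toNat = i := by omega
    rw [t1, t2]
  have hz2 : zchoose ((a:ℤ)+b-4) ((i:ℤ)-1)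
      = (if 1 ≤ i then ((a+b-4).choose (i-1) : ℤ) else 0) := by
    by_cases h1 : 1 ≤ i
    · rw [if_pos h1]; unfold zchoose
      rw [if_pos ⟨by omega, by omega⟩]
      have t1 : ((a:ℤ)+b-4).toNat = a+b-4 := by omega
      have t2 : ((i:ℤ)-1).toNat = i-1 := by omega
      rw [t1, t2]
    · rw [if_neg h1]; unfold zchoose; rw [if_neg (by omega)]
  have hz3 : zchoose ((a:ℤ)+b-5) ((i:ℤ)-2)
      = (if 2 ≤ i then ((a+b-5).choose (i-2) : ℤ) else 0) := by
    by_cases h2 : 2 ≤ i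
    · rw [if_pos h2]; unfold zchoose
      rw [if_pos ⟨by omega, by omega⟩]
      have t1 : ((a:ℤ)+b-5).toNat = a+b-5 := by omega
      have t2 : ((i:ℤ)-2).toNat = i-2 := by omega
      rw [t1, t2]
    · rw [if_neg h2]; unfold zchoose; rw [if_neg (by omega)]
  rw [hz1, hz2, hz3]
  unfold mc0 mc1 mc2
  ring
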